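/- If f is a pseudo-Morse function consistent with a gradient vector field V, then the merged relation obtained as the transitive closure of the union of ≺_f (defined by φ ≺_f ρ ⟺ f(φ)<f(ρ)) and the induced partial order ≺_V is a strict partial order; consequently there exists a strict total order on the cells that is simultaneously a linear extension of ≺_f and of ≺_V. -/

import Mathlib

open Classical

variable {Cell : Type}

/-- A discrete vector field: a set of pairs (σ,τ) with σ a facet of τ,
each cell occurring in at most one pair. -/
def IsVectorField (facet : Cell → Cell → Prop) (V : Set (Cell × Cell)) : Prop :=
  (∀ p ∈ V, facet p.1 p.2) ∧
  ∀ p ∈ V, ∀ q ∈ V, (p.1 = q.1 ∨ p.1 = q.2 ∨ p.2 = q.1 ∨ p.2 = q.2) → p = q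

/-- The covering relation ←_V : `covRel facet V x y` means x ←_V y. -/
def covRel (facet : Cell → Cell → Prop) (V : Set (Cell × Cell)) (x y : Cell) : Prop :=
  (facet x y ∧ (x, y) ∉ V) ∨ (y, x) ∈ V

/-- The strict partial order ≺_V induced by V: transitive closure of ←_V. -/
def indOrder (facet : Cell → Cell → Prop) (V : Set (Cell × Cell)) : Cell → Cell → Prop :=
  Relation.TransGen (covRel facet V)

/-- The reflexive closure ⪯_V of ≺_V. -/
def indOrderLe (facet : Cell → Cell → Prop) (V : Set (Cell × Cell)) : Cell → Cell → Prop :=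
  Relation.ReflTransGen (covRel facet V)

/-- A V-path (σ₀,τ₀,σ₁,…,τ_{r-1},σ_r), encoded by its first cell σ₀ and the
list of pairs (τ_i, σ_{i+1}). -/
def IsVPath (facet : Cell → Cell → Prop) (V : Set (Cell × Cell)) :
    Cell → List (Cell × Cell) → Prop
  | _, [] => True
  | σ, (τ, σ') :: rest => (σ, τ) ∈ V ∧ facet σ' τ ∧ (σ', τ) ∉ V ∧ IsVPath facet V σ' rest

/-- The last cell σ_r of a V-path. -/
def pathLast (σ : Cell) (l : List (Cell × Cell)) : Cell :=
  (l.getLast?.map Prod.snd).getD σ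

/-- No nontrivial closed V-paths. -/
def NoClosedVPath (facet : Cell → Cell → Prop) (V : Set (Cell × Cell)) : Prop :=
  ∀ σ (l : List (Cell × Cell)), IsVPath facet V σ l → l ≠ [] → pathLast σ l ≠ σ

/-- A discrete gradient vector field. -/
def IsGradient (facet : Cell → Cell → Prop) (V : Set (Cell × Cell)) : Prop :=
  IsVectorField facet V ∧ NoClosedVPath facet V

/-- A cell is critical if it belongs to no pair of V. -/
def IsCritical (V : Set (Cell × Cell)) (x : Cell) : Prop :=
  ∀ p ∈ V, p.1 ≠ x ∧ p.2 ≠ x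

/-- f is a discrete Morse function with gradient vector field V. -/
def IsMorse (facet : Cell → Cell → Prop) (V : Set (Cell × Cell)) (f : Cell → ℝ) : Prop :=
  ∀ σ τ, facet σ τ → (((σ, τ) ∉ V → f σ < f τ) ∧ ((σ, τ) ∈ V → f τ ≤ f σ))

/-- f is a discrete pseudo-Morse function consistent with V. -/
def IsPseudoMorse (facet : Cell → Cell → Prop) (V : Set (Cell × Cell)) (f : Cell → ℝ) : Prop :=
  ∀ σ τ, facet σ τ → (((σ, τ) ∉ V → f σ ≤ f τ) ∧ ((σ, τ) ∈ V → f τ ≤ f σ))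

/-- The pairs (σ_i, τ_i) of a V-path given by σ₀ and l = [(τ₀,σ₁),…]. -/
def oldPairs (σ0 : Cell) (l : List (Cell × Cell)) : List (Cell × Cell) :=
  List.zip (σ0 :: l.map Prod.snd) (l.map Prod.fst)

/-- The reversed pairs (σ_{i+1}, τ_i) of a V-path. -/
def newPairs (l : List (Cell × Cell)) : List (Cell × Cell) :=
  l.map (fun p => (p.2, p.1))

/-- Reversal of V along the V-path from σ₀ ∈ ∂ρ given by l (Forman cancelation). -/
def reverseField (V : Set (Cell × Cell)) (ρ σ0 : Cell) (l : List (Cell × Cell)) :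
    Set (Cell × Cell) :=
  (V \ {p : Cell × Cell | p ∈ oldPairs σ0 l}) ∪ {p : Cell × Cell | p ∈ newPairs l} ∪ {(σ0, ρ)}

/-- A combinatorial surface (closed): facets raise dimension by one, dimensions are ≤ 2,
every 1-cell has exactly two boundary 0-cells and is a facet of exactly two 2-cells. -/
def IsCombSurface (dim : Cell → ℕ) (facet : Cell → Cell → Prop) : Prop :=
  (∀ σ τ, facet σ τ → dim τ = dim σ + 1) ∧
  (∀ x, dim x ≤ 2) ∧
  (∀ τ, dim τ = 1 → ∃ a b, a ≠ b ∧ ∀ x, facet x τ ↔ (x = a ∨ x = b)) ∧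
  (∀ τ, dim τ = 1 → ∃ A B, A ≠ B ∧ ∀ X, facet τ X ↔ (X = A ∨ X = B))

/-! A cycle of `←_V` moves up along unpaired facets and down along pairs of `V`. From a cell of
maximal dimension on it the cycle must descend along a pair `(σ, τ)`, and then, `σ` being
already paired, ascend along an unpaired facet to a cell of the same maximal dimension. Read
backwards, this is a V-path that can be continued forever, impossible in a finite complex
without closed V-paths; so `≺_V` is acyclic. Since `f` is monotone along `≺_V`, every chain of
`≺_f ∪ ≺_V` is a `≺_V` relation or raises `f` strictly, hence is not closed, and any strict
order has a linear extension. -/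

theorem IsStrictOrder.exists_isStrictTotalOrder_ge {α : Type*} (r : α → α → Prop)
    [IsStrictOrder α r] : ∃ s : α → α → Prop, IsStrictTotalOrder α s ∧ ∀ a b, r a b → s a b := by
  let := partialOrderOfSO r
  refine ⟨(toLinearExtension · < toLinearExtension ·),
    inferInstanceAs (IsStrictTotalOrder (LinearExtension α) (· < ·)), fun a b h => ?_⟩
  exact toLinearExtension.monotone.strictMono_of_injective (fun _ _ h => h) (show a < b from h)

theorem Relation.TransGen.exists_rel_transGen_self {α : Type*} {r : α → α → Prop} {a : α}
    (h : TransGen r a a) : ∃ b, r a b ∧ TransGen r b b := by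
  obtain ⟨b, hab, hba⟩ := TransGen.head'_iff.1 h
  exact ⟨b, hab, TransGen.tail' hba hab⟩

theorem Relation.TransGen.lt_or_of_lt_or {α β : Type*} [Preorder β] {f : α → β}
    {r : α → α → Prop} [IsTrans α r] (hf : ∀ a b, r a b → f a ≤ f b) {a b : α}
    (h : TransGen (fun a b => f a < f b ∨ r a b) a b) : f a < f b ∨ r a b := by
  induction h with
  | single h => exact h
  | tail _ hbc ih =>
    rcases ih with h₁ | h₁ <;> rcases hbc with h₂ | h₂
    · exact .inl (h₁.trans h₂)
    · exact .inl (h₁.trans_le (hf _ _ h₂))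
    · exact .inl ((hf _ _ h₁).trans_lt h₂)
    · exact .inr (_root_.trans h₁ h₂)

theorem pathLast_cons (σ : Cell) (p : Cell × Cell) (l : List (Cell × Cell)) :
    pathLast σ (p :: l) = pathLast p.2 l := by
  cases l with
  | nil => simp [pathLast]
  | cons q l' =>
    cases hz : (q :: l').getLast? with
    | none => simp at hz
    | some z => simp [pathLast, List.getLast?_cons_cons, hz]

section VPath

variable (facet : Cell → Cell → Prop) (V : Set (Cell × Cell))

def VPathStep (σ σ' : Cell) : Prop :=
  ∃ τ, (σ, τ) ∈ V ∧ facet σ' τ ∧ (σ', τ) ∉ V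

variable {facet V}

theorem exists_isVPath_of_transGen_vPathStep {σ σ' : Cell}
    (h : Relation.TransGen (VPathStep facet V) σ σ') :
    ∃ l, IsVPath facet V σ l ∧ l ≠ [] ∧ pathLast σ l = σ' := by
  induction h using Relation.TransGen.head_induction_on with
  | single h =>
    obtain ⟨τ, hστ, hfac, hnot⟩ := h
    exact ⟨[(τ, _)], ⟨hστ, hfac, hnot, trivial⟩, List.cons_ne_nil _ _, rfl⟩
  | head h _ ih =>
    obtain ⟨τ, hστ, hfac, hnot⟩ := h
    obtain ⟨l, hl, -, hlast⟩ := ih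
    exact ⟨(τ, _) :: l, ⟨hστ, hfac, hnot, hl⟩, List.cons_ne_nil _ _, by rw [pathLast_cons, hlast]⟩

theorem NoClosedVPath.wellFounded_vPathStep [Finite Cell] (hV : NoClosedVPath facet V) :
    WellFounded (VPathStep facet V) := by
  have : Std.Irrefl (Relation.TransGen (VPathStep facet V)) := ⟨fun σ h => by
    obtain ⟨l, hl, hne, hlast⟩ := exists_isVPath_of_transGen_vPathStep h
    exact hV σ l hl hne hlast⟩
  exact Subrelation.wf Relation.TransGen.single (Finite.wellFounded_of_trans_of_irrefl _)

end VPath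

section CovRelCycle

variable {dim : Cell → ℕ} {facet : Cell → Cell → Prop}
  (hdim : ∀ σ τ, facet σ τ → dim τ = dim σ + 1) {V : Set (Cell × Cell)}
include hdim

theorem exists_pair_on_cycle_of_dim_max {τ : Cell}
    (hτ : Relation.TransGen (covRel facet V) τ τ)
    (hmax : ∀ y, Relation.TransGen (covRel facet V) y y → dim y ≤ dim τ) :
    ∃ σ, (σ, τ) ∈ V ∧ Relation.TransGen (covRel facet V) σ σ := by
  obtain ⟨y, hτy | hyτ, hy⟩ := hτ.exists_rel_transGen_self
  · have := hdim _ _ hτy.1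
    have := hmax y hy
    omega
  · exact ⟨y, hyτ, hy⟩

theorem exists_unpaired_facet_on_cycle (hV : IsVectorField facet V) {σ τ : Cell}
    (hστ : (σ, τ) ∈ V) (hσ : Relation.TransGen (covRel facet V) σ σ) :
    ∃ τ', facet σ τ' ∧ (σ, τ') ∉ V ∧ Relation.TransGen (covRel facet V) τ' τ' ∧
      dim τ' = dim τ := by
  have hdimτ : dim τ = dim σ + 1 := hdim _ _ (hV.1 _ hστ)
  obtain ⟨τ', ⟨hfac, hnot⟩ | hτ'σ, hτ'⟩ := hσ.exists_rel_transGen_self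
  · exact ⟨τ', hfac, hnot, hτ', by rw [hdim _ _ hfac, hdimτ]⟩
  · have hστ_eq : σ = τ := congrArg Prod.snd (hV.2 _ hτ'σ _ hστ (.inr (.inr (.inl rfl))))
    rw [hστ_eq] at hdimτ
    omega

theorem indOrder_irrefl [Finite Cell] (hV : IsGradient facet V) (x : Cell) :
    ¬ indOrder facet V x x := by
  intro hx
  let onCycle : Set Cell := {y | Relation.TransGen (covRel facet V) y y}
  let IsTop (τ : Cell) : Prop := τ ∈ onCycle ∧ ∀ y ∈ onCycle, dim y ≤ dim τ
  let Q : Set Cell := {σ | σ ∈ onCycle ∧ ∃ τ, IsTop τ ∧ (σ, τ) ∈ V}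
  obtain ⟨τ₀, hτ₀, hmax₀⟩ := Set.exists_max_image onCycle dim (Set.toFinite _) ⟨x, hx⟩
  obtain ⟨σ₀, hσ₀τ₀, hσ₀⟩ := exists_pair_on_cycle_of_dim_max hdim hτ₀ hmax₀
  obtain ⟨σ, ⟨hσ, τ, ⟨hτ, hmax⟩, hστ⟩, hmin⟩ :=
    hV.2.wellFounded_vPathStep.has_min Q ⟨σ₀, hσ₀, τ₀, ⟨hτ₀, hmax₀⟩, hσ₀τ₀⟩
  obtain ⟨τ', hfac, hnot, hτ', hdimτ'⟩ :=
    exists_unpaired_facet_on_cycle hdim hV.1 hστ hσ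
  have hmax' : ∀ y ∈ onCycle, dim y ≤ dim τ' := hdimτ' ▸ hmax
  obtain ⟨σ', hσ'τ', hσ'⟩ := exists_pair_on_cycle_of_dim_max hdim hτ' hmax'
  exact hmin σ' ⟨hσ', τ', ⟨hτ', hmax'⟩, hσ'τ'⟩ ⟨τ', hσ'τ', hfac, hnot⟩

end CovRelCycle

theorem IsPseudoMorse.le_of_indOrder {facet : Cell → Cell → Prop} {V : Set (Cell × Cell)}
    {f : Cell → ℝ} (hf : IsPseudoMorse facet V f) (hV : IsVectorField facet V) {a b : Cell}
    (h : indOrder facet V a b) : f a ≤ f b := by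
  have hcov : ∀ x y, covRel facet V x y → f x ≤ f y := by
    rintro x y (⟨hfac, hnot⟩ | hyx)
    · exact (hf _ _ hfac).1 hnot
    · exact (hf _ _ (hV.1 _ hyx)).2 hyx
  induction h with
  | single h => exact hcov _ _ h
  | tail _ h ih => exact ih.trans (hcov _ _ h)

/-- for f pseudo-Morse consistent with V, the transitive closure of
≺_f ∪ ≺_V is a strict partial order, and there is a strict total order extending both. -/
theorem stmt3 [Fintype Cell] (dim : Cell → ℕ) (facet : Cell → Cell → Prop)
    (hdim : ∀ σ τ, facet σ τ → dim τ = dim σ + 1)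
    (V : Set (Cell × Cell)) (hV : IsGradient facet V)
    (f : Cell → ℝ) (hf : IsPseudoMorse facet V f) :
    IsStrictOrder Cell
      (Relation.TransGen (fun a b => f a < f b ∨ indOrder facet V a b)) ∧
    ∃ lt : Cell → Cell → Prop, IsStrictTotalOrder Cell lt ∧
      (∀ a b, f a < f b → lt a b) ∧ (∀ a b, indOrder facet V a b → lt a b) := by
  have : IsTrans Cell (indOrder facet V) := inferInstanceAs (IsTrans Cell (Relation.TransGen _))
  have hmono : ∀ a b, indOrder facet V a b → f a ≤ f b := fun _ _ => hf.le_of_indOrder hV.1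
  have hstrict : IsStrictOrder Cell
      (Relation.TransGen (fun a b => f a < f b ∨ indOrder facet V a b)) :=
    { irrefl a h := (h.lt_or_of_lt_or hmono).elim (lt_irrefl _) (indOrder_irrefl hdim hV a) }
  obtain ⟨lt, hlt, hext⟩ := hstrict.exists_isStrictTotalOrder_ge
  exact ⟨hstrict, lt, hlt, fun a b h => hext a b (.single (.inl h)),
    fun a b h => hext a b (.single (.inr h))⟩
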